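/- arXiv:2302.02686 — 4 statements merged into one kernel-verified Lean document; each statement's English description precedes it below -/
import Mathlib

section
/- If c is a well-defined configuration of a well-formed Token Flow Graph G(E) for an E-equivalence (N1,m1) ▷_E (N2,m2), then the system of equations E together with the assignments {v = c(v) : c(v) defined} is consistent (has a non-negative integer solution). Conversely, if c is a total configuration of G(E) such that E together with the assignments given by c is consistent, then c is well-defined. -/
open Finset

/-- A Petri net over a type of places `P`. -/
structure PetriNet (P : Type) where
  Trans : Type
  pre : Trans → P → ℕ
  post : Trans → P → ℕ

/-- Firing relation between markings. -/
def PetriNet.fire {P : Type} (N : PetriNet P) (m m' : P → ℕ) : Prop :=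
  ∃ t : N.Trans, (∀ p, N.pre t p ≤ m p) ∧ ∀ p, m' p = m p - N.pre t p + N.post t p

/-- Reachability of a marking from an initial one. -/
def PetriNet.reach {P : Type} (N : PetriNet P) (m0 m : P → ℕ) : Prop :=
  Relation.ReflTransGen N.fire m0 m

/-- A marked net is safe (1-bounded) when every reachable marking has at most one token per place. -/
def PetriNet.Safe {P : Type} (N : PetriNet P) (m0 : P → ℕ) : Prop :=
  ∀ m, N.reach m0 m → ∀ p, m p ≤ 1

/-- Two places are concurrent when some reachable marking marks both positively. -/
def PetriNet.ConcPlaces {P : Type} (N : PetriNet P) (m0 : P → ℕ) (p q : P) : Prop :=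
  ∃ m, N.reach m0 m ∧ 0 < m p ∧ 0 < m q

/-- A Token Flow Graph: redundancy arcs `R`, agglomeration arcs `A` (disjoint from `R`,
enforced in well-formedness), and constant nodes given by `kval`. -/
structure TFG (V : Type) [DecidableEq V] where
  R : Finset (V × V)
  A : Finset (V × V)
  kval : V → Option ℕ

variable {V : Type} [DecidableEq V]

def TFG.Edge (G : TFG V) (v w : V) : Prop := (v, w) ∈ G.R ∨ (v, w) ∈ G.A

/-- `G.Reach v w` means `v →* w`. -/
def TFG.Reach (G : TFG V) : V → V → Prop := Relation.ReflTransGen G.Edge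

/-- Successor set `succ(v)` (includes `v` itself). -/
def TFG.succs (G : TFG V) (v : V) : Set V := {w | G.Reach v w}

/-- A root has no incoming arc. -/
def TFG.IsRoot (G : TFG V) (v : V) : Prop := ∀ w, ¬ G.Edge w v

/-- A ∘-leaf has no outgoing agglomeration arc. -/
def TFG.IsCircLeaf (G : TFG V) (v : V) : Prop := ∀ w, (v, w) ∉ G.A

/-- The set `X` such that `v ∘→ X` (agglomeration children of `v`). -/
def TFG.aggChildren (G : TFG V) (v : V) : Finset V :=
  (G.A.filter (fun e => e.1 = v)).image Prod.snd

/-- The set `X` such that `X →• v` (redundancy parents of `v`). -/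
def TFG.redParents (G : TFG V) (v : V) : Finset V :=
  (G.R.filter (fun e => e.2 = v)).image Prod.fst

/-- A configuration is a partial valuation of the nodes; it must agree with constant nodes. -/
def TFG.IsConfig (G : TFG V) (c : V → Option ℕ) : Prop :=
  ∀ v n, G.kval v = some n → c v = some n

/-- A configuration is total when it is defined on every node. -/
def TotalConf (c : V → Option ℕ) : Prop := ∀ v, c v ≠ none

/-- Value of a configuration at a node (0 if undefined). -/
def cval (c : V → Option ℕ) (v : V) : ℕ := (c v).getD 0

/-- Well-definedness of a configuration: conditions (CBot) and (CEq). -/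
def TFG.WellDef (G : TFG V) (c : V → Option ℕ) : Prop :=
  (∀ v w, G.Edge v w → (c v = none ↔ c w = none)) ∧
  (∀ v n, c v = some n →
    ((G.aggChildren v).Nonempty → n = ∑ w ∈ G.aggChildren v, cval c w) ∧
    ((G.redParents v).Nonempty → n = ∑ w ∈ G.redParents v, cval c w))

/-- A system of reduction equations: `(v, X)` stands for the equation `v = ∑_{w ∈ X} w`. -/
abbrev EqSys (V : Type) := Finset (V × Finset V)

/-- A (non-negative integer) solution of the system `E`. -/
def Solves (E : EqSys V) (s : V → ℕ) : Prop :=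
  ∀ e ∈ E, s e.1 = ∑ w ∈ e.2, s w

/-- `E, ⟦c⟧` is consistent: some solution of `E` extends the partial valuation `c`. -/
def ConsistentWith (E : EqSys V) (c : V → Option ℕ) : Prop :=
  ∃ s : V → ℕ, Solves E s ∧ ∀ v n, c v = some n → s v = n

/-- Variables occurring in `E`. -/
def fvars (E : EqSys V) : Set V := {v | ∃ e ∈ E, v = e.1 ∨ v ∈ e.2}

/-- View a marking over the set of places `P` as a partial configuration over `V`. -/
def mconf (P : Set V) [DecidablePred (· ∈ P)] (m : ↥P → ℕ) : V → Option ℕ :=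
  fun v => if h : v ∈ P then some (m ⟨v, h⟩) else none

/-- Restriction of a configuration to a set of places, seen as a marking. -/
def restrict (c : V → Option ℕ) (P : Set V) : ↥P → ℕ := fun p => cval c ↑p

/-- Compatibility `c ≡ m` of a configuration with a marking on `P`. -/
def CompatM (c : V → Option ℕ) (P : Set V) (m : ↥P → ℕ) : Prop :=
  ∀ p : ↥P, c ↑p = some (m p)

/-- A solution of `E` agrees with a marking on `P`. -/
def AgreesOn (s : V → ℕ) (P : Set V) (m : ↥P → ℕ) : Prop := ∀ p : ↥P, s ↑p = m p

/-- `E`-equivalence `(N1,m1) ▷_E (N2,m2)`: conditions (A1), (A2), (A3). -/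
structure EEquiv (E : EqSys V) (P1 P2 : Set V)
    (N1 : PetriNet ↥P1) (m1 : ↥P1 → ℕ) (N2 : PetriNet ↥P2) (m2 : ↥P2 → ℕ) : Prop where
  A1l : ∀ m, N1.reach m1 m → ∃ s, Solves E s ∧ AgreesOn s P1 m
  A1r : ∀ m, N2.reach m2 m → ∃ s, Solves E s ∧ AgreesOn s P2 m
  A2 : ∃ s, Solves E s ∧ AgreesOn s P1 m1 ∧ AgreesOn s P2 m2
  A3 : ∀ m1' m2', (∃ s, Solves E s ∧ AgreesOn s P1 m1' ∧ AgreesOn s P2 m2') →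
      (N1.reach m1 m1' ↔ N2.reach m2 m2')

/-- Well-formedness of a TFG for an equivalence statement: conditions (T1)–(T6). -/
structure WellFormed (G : TFG V) (E : EqSys V) (P1 P2 : Set V) : Prop where
  T1 : {v | G.kval v = none} = P1 ∪ P2 ∪ fvars E
  T2 : ∀ v, G.kval v ≠ none → G.IsRoot v
  T3a : ∀ p p' q, (p, q) ∈ G.A → G.Edge p' q → p' = p
  T3b : ∀ p q, ¬((p, q) ∈ G.R ∧ (p, q) ∈ G.A)
  T4 : ∀ v X, ((X = G.aggChildren v ∨ X = G.redParents v) ∧ X.Nonempty) ↔ (v, X) ∈ E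
  T5 : ∀ v, ¬ Relation.TransGen G.Edge v v
  T6root : ∀ v, G.kval v = none → (G.IsRoot v ↔ v ∈ P2)
  T6leaf : ∀ v, G.kval v = none → (G.IsCircLeaf v ↔ v ∈ P1)

/-- Node concurrency relation of the TFG: both nodes are positive in some
total, well-defined configuration whose restriction to `N2` is reachable. -/
def NodeConc (G : TFG V) (P2 : Set V) [DecidablePred (· ∈ P2)]
    (N2 : PetriNet ↥P2) (m2 : ↥P2 → ℕ) (v w : V) : Prop :=
  ∃ c, G.IsConfig c ∧ TotalConf c ∧ G.WellDef c ∧ N2.reach m2 (restrict c P2) ∧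
    0 < cval c v ∧ 0 < cval c w

/-! The extension by zero `cval c` of a well-defined configuration solves `E`: by (T4) every
equation of `E` is a bundle of arcs `v ∘→ X` or `X →• v`, so by (CBot) its nodes are either all
defined, where (CEq) is the equation itself, or all undefined, where both sides vanish.
Conversely, a solution extending a total configuration is that configuration, and (T4) puts
every instance of (CEq) in `E`. -/

namespace TFG

variable {G : TFG V} {c : V → Option ℕ}

theorem edge_of_mem_aggChildren {v w : V} (h : w ∈ G.aggChildren v) : G.Edge v w := by
  simp only [aggChildren, mem_image, mem_filter] at h
  obtain ⟨⟨a, b⟩, ⟨hA, rfl⟩, rfl⟩ := h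
  exact Or.inr hA

theorem edge_of_mem_redParents {v w : V} (h : w ∈ G.redParents v) : G.Edge w v := by
  simp only [redParents, mem_image, mem_filter] at h
  obtain ⟨⟨a, b⟩, ⟨hR, rfl⟩, rfl⟩ := h
  exact Or.inl hR

theorem WellDef.eq_none_iff_of_mem {v w : V} {X : Finset V} (hc : G.WellDef c)
    (hX : X = G.aggChildren v ∨ X = G.redParents v) (hw : w ∈ X) :
    c v = none ↔ c w = none := by
  rcases hX with rfl | rfl
  · exact hc.1 v w (edge_of_mem_aggChildren hw)
  · exact (hc.1 w v (edge_of_mem_redParents hw)).symm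

theorem WellDef.cval_eq_sum {v : V} {X : Finset V} (hc : G.WellDef c)
    (hX : X = G.aggChildren v ∨ X = G.redParents v) (hne : X.Nonempty) :
    cval c v = ∑ w ∈ X, cval c w := by
  cases hv : c v with
  | none =>
    have hzero : ∀ w ∈ X, cval c w = 0 := fun w hw => by
      simp [cval, (hc.eq_none_iff_of_mem hX hw).mp hv]
    rw [sum_eq_zero hzero]
    simp [cval, hv]
  | some n =>
    simp only [cval, hv, Option.getD_some]
    rcases hX with rfl | rfl
    · exact (hc.2 v n hv).1 hne
    · exact (hc.2 v n hv).2 hne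

theorem WellDef.solves_cval {E : EqSys V} (hc : G.WellDef c)
    (hE : ∀ v X, (v, X) ∈ E → (X = G.aggChildren v ∨ X = G.redParents v) ∧ X.Nonempty) :
    Solves E (cval c) := by
  rintro ⟨v, X⟩ he
  obtain ⟨hX, hne⟩ := hE v X he
  exact hc.cval_eq_sum hX hne

theorem wellDef_of_solves_cval {E : EqSys V} (htot : TotalConf c) (hs : Solves E (cval c))
    (hE : ∀ v X, (X = G.aggChildren v ∨ X = G.redParents v) ∧ X.Nonempty → (v, X) ∈ E) :
    G.WellDef c := by
  refine ⟨fun v w _ => by simp [htot v, htot w], fun v n hv => ⟨fun hne => ?_, fun hne => ?_⟩⟩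
  · simpa [cval, hv] using hs _ (hE v _ ⟨Or.inl rfl, hne⟩)
  · simpa [cval, hv] using hs _ (hE v _ ⟨Or.inr rfl, hne⟩)

end TFG

theorem consistentWith_of_solves_cval {α : Type} {E : EqSys α} {c : α → Option ℕ}
    (hs : Solves E (cval c)) : ConsistentWith E c :=
  ⟨cval c, hs, fun v n hv => by simp [cval, hv]⟩

theorem TotalConf.solves_cval_of_consistentWith {α : Type} {E : EqSys α} {c : α → Option ℕ}
    (htot : TotalConf c) (hcons : ConsistentWith E c) : Solves E (cval c) := by
  obtain ⟨s, hs, hext⟩ := hcons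
  have hsc : s = cval c := funext fun v => by
    obtain ⟨n, hv⟩ := Option.ne_none_iff_exists'.mp (htot v)
    simp [cval, hv, hext v n hv]
  exact hsc ▸ hs

theorem wellDefined_configurations_are_solutions_general {V : Type} [DecidableEq V] (G : TFG V) (E : EqSys V)
    (P1 P2 : Set V)
    (hwf : WellFormed G E P1 P2) :
    (∀ c : V → Option ℕ, G.IsConfig c → G.WellDef c → ConsistentWith E c) ∧
    (∀ c : V → Option ℕ, G.IsConfig c → TotalConf c → ConsistentWith E c → G.WellDef c) :=
  ⟨fun _ _ hc => consistentWith_of_solves_cval (hc.solves_cval fun v X => (hwf.T4 v X).mpr),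
    fun _ _ htot hcons => TFG.wellDef_of_solves_cval htot
      (htot.solves_cval_of_consistentWith hcons) fun v X => (hwf.T4 v X).mp⟩

theorem wellDefined_configurations_are_solutions {V : Type} [DecidableEq V] (G : TFG V) (E : EqSys V)
    (P1 P2 : Set V) [DecidablePred (· ∈ P1)] [DecidablePred (· ∈ P2)]
    (N1 : PetriNet ↥P1) (m1 : ↥P1 → ℕ) (N2 : PetriNet ↥P2) (m2 : ↥P2 → ℕ)
    (hwf : WellFormed G E P1 P2) (heq : EEquiv E P1 P2 N1 m1 N2 m2) :
    (∀ c : V → Option ℕ, G.IsConfig c → G.WellDef c → ConsistentWith E c) ∧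
    (∀ c : V → Option ℕ, G.IsConfig c → TotalConf c → ConsistentWith E c → G.WellDef c) :=
  wellDefined_configurations_are_solutions_general G E P1 P2 hwf
end

section
/- Let G(E) be a well-formed TFG for (N1,m1) ▷_E (N2,m2) and c a well-defined configuration. If p ∘→ {q1,...,qk} (p agglomerates into q1,...,qk) and c(p) ≠ ⊥, then for every sequence (l1,...,lk) of natural numbers with c(p) = l1 + ... + lk, there exists a well-defined configuration c' such that c'(p) = c(p), c'(qi) = li for all i, and c'(v) = c(v) for every node v not in the successor set of p. -/
open Finset

variable {V : Type} [DecidableEq V]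

/-! Redistribute the `n` tokens of `p` among its agglomeration children as `l` prescribes and push
the change down `succ p` by well-founded recursion along the arcs, which is possible because the
TFG is acyclic (T5) and finite. A node of `succ p` with an agglomeration parent `u` gets its share
of the new value of `u` (everything goes to one chosen child when `u ≠ p`); any other node of
`succ p` gets the sum of its redundancy parents. Nodes outside `succ p` keep their values.

By (T3) an agglomeration arc is the only arc into its target, so (CEq) holds inside `succ p` by
construction; and for a node outside `succ p`, the only node of `succ p` among its agglomeration
children and redundancy parents can be `p` itself, whose value does not change. -/

theorem wellFounded_of_finite_transGen {α : Type*} {r : α → α → Prop}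
    (hfin : ∀ a, {b | Relation.TransGen r b a}.Finite)
    (hacyc : ∀ a, ¬ Relation.TransGen r a a) : WellFounded r := by
  have : IsStrictOrder α (Relation.TransGen r) :=
    { irrefl := hacyc, trans := fun _ _ _ => Relation.TransGen.trans }
  refine ⟨fun a => (Set.WellFoundedOn.acc_iff_wellFoundedOn.out 0 2).2 ?_⟩
  exact ((hfin a).wellFoundedOn (r := Relation.TransGen r)).mono' fun _ _ _ _ h =>
    Relation.TransGen.single h

namespace TFG

variable {V : Type} [DecidableEq V] {G : TFG V}

theorem mem_aggChildren {v w : V} : w ∈ G.aggChildren v ↔ (v, w) ∈ G.A := by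
  simp [aggChildren]

theorem mem_redParents {v w : V} : w ∈ G.redParents v ↔ (w, v) ∈ G.R := by
  simp [redParents]

def aggParents (G : TFG V) (v : V) : Finset V :=
  (G.A.filter (fun e => e.2 = v)).image Prod.fst

theorem mem_aggParents {v w : V} : w ∈ G.aggParents v ↔ (w, v) ∈ G.A := by
  simp [aggParents]

theorem finite_transGen_edge (G : TFG V) (v : V) :
    {u | Relation.TransGen G.Edge u v}.Finite := by
  refine ((G.R ∪ G.A).image Prod.fst).finite_toSet.subset fun u hu => ?_
  obtain ⟨w, hw⟩ : ∃ w, G.Edge u w := by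
    induction hu with
    | single h => exact ⟨_, h⟩
    | tail _ _ ih => exact ih
  simp only [coe_image, Set.mem_image, mem_coe, mem_union]
  exact ⟨(u, w), hw, rfl⟩

theorem wellFounded_edge (hT5 : ∀ v, ¬ Relation.TransGen G.Edge v v) :
    WellFounded G.Edge :=
  wellFounded_of_finite_transGen G.finite_transGen_edge hT5

theorem aggParents_eq_singleton (hT3a : ∀ p p' q, (p, q) ∈ G.A → G.Edge p' q → p' = p)
    {u v : V} (h : (u, v) ∈ G.A) : G.aggParents v = {u} := by
  ext w
  simp only [mem_aggParents, mem_singleton]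
  exact ⟨fun hw => hT3a u w v h (Or.inr hw), fun hw => hw ▸ h⟩

theorem redParents_eq_empty (hT3a : ∀ p p' q, (p, q) ∈ G.A → G.Edge p' q → p' = p)
    (hT3b : ∀ p q, ¬((p, q) ∈ G.R ∧ (p, q) ∈ G.A)) {u v : V} (h : (u, v) ∈ G.A) :
    G.redParents v = ∅ := by
  refine eq_empty_iff_forall_notMem.2 fun w hw => ?_
  have hR := mem_redParents.1 hw
  obtain rfl := hT3a u w v h (Or.inl hR)
  exact hT3b w v ⟨hR, h⟩

theorem WellDef.ne_none_of_reach {c : V → Option ℕ} {p : V} {n : ℕ} (hwd : G.WellDef c)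
    (hp : c p = some n) {v : V} (hv : G.Reach p v) : c v ≠ none := by
  induction hv with
  | refl => simp [hp]
  | tail _ he ih => exact fun hw => ih ((hwd.1 _ _ he).2 hw)

noncomputable def pick (G : TFG V) (v : V) : V :=
  if h : (G.aggChildren v).Nonempty then h.choose else v

theorem pick_mem {v : V} (h : (G.aggChildren v).Nonempty) : G.pick v ∈ G.aggChildren v := by
  rw [pick, dif_pos h]
  exact h.choose_spec

noncomputable def share (G : TFG V) (p : V) (l : V → ℕ) (u : V) (m : ℕ) (w : V) : ℕ :=
  if u = p then l w else if w = G.pick u then m else 0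

theorem share_self {p : V} {l : V → ℕ} {m : ℕ} {w : V} : G.share p l p m w = l w :=
  if_pos rfl

theorem sum_share_of_ne {p u : V} (hu : u ≠ p) (h : (G.aggChildren u).Nonempty)
    (l : V → ℕ) (m : ℕ) : ∑ w ∈ G.aggChildren u, G.share p l u m w = m := by
  simp only [share, if_neg hu]
  rw [sum_ite_eq', if_pos (pick_mem h)]

open Classical in
noncomputable def propagate (G : TFG V) (hG : WellFounded G.Edge) (c : V → Option ℕ) (p : V)
    (n : ℕ) (l : V → ℕ) : V → ℕ :=
  hG.fix fun v s =>
    if G.Reach p v then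
      if v = p then n
      else ∑ u ∈ (G.aggParents v).attach, G.share p l u (s u (Or.inr (mem_aggParents.1 u.2))) v
        + ∑ u ∈ (G.redParents v).attach, s u (Or.inl (mem_redParents.1 u.2))
    else cval c v

section Propagate

variable {hG : WellFounded G.Edge} {c : V → Option ℕ} {p : V} {n : ℕ} {l : V → ℕ}

open Classical in
theorem propagate_eq (v : V) :
    G.propagate hG c p n l v =
      if G.Reach p v then
        if v = p then n
        else ∑ u ∈ G.aggParents v, G.share p l u (G.propagate hG c p n l u) v
          + ∑ u ∈ G.redParents v, G.propagate hG c p n l u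
      else cval c v := by
  conv_lhs => rw [propagate, WellFounded.fix_eq]
  split_ifs
  · rfl
  · exact congrArg₂ (· + ·)
      (sum_attach (G.aggParents v) fun u => G.share p l u (G.propagate hG c p n l u) v)
      (sum_attach (G.redParents v) (G.propagate hG c p n l))
  · rfl

theorem propagate_of_not_reach {v : V} (hv : ¬ G.Reach p v) :
    G.propagate hG c p n l v = cval c v := by
  rw [propagate_eq, if_neg hv]

theorem propagate_self : G.propagate hG c p n l p = n := by
  rw [propagate_eq, if_pos (show G.Reach p p from .refl), if_pos rfl]

theorem ne_of_reach_of_edge (hT5 : ∀ v, ¬ Relation.TransGen G.Edge v v) {v w : V}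
    (hv : G.Reach p v) (h : G.Edge v w) : w ≠ p := by
  rintro rfl
  exact hT5 w (Relation.TransGen.tail' hv h)

theorem propagate_of_mem_A (hT5 : ∀ v, ¬ Relation.TransGen G.Edge v v)
    (hT3a : ∀ p p' q, (p, q) ∈ G.A → G.Edge p' q → p' = p)
    (hT3b : ∀ p q, ¬((p, q) ∈ G.R ∧ (p, q) ∈ G.A)) {u v : V} (hu : G.Reach p u)
    (h : (u, v) ∈ G.A) :
    G.propagate hG c p n l v = G.share p l u (G.propagate hG c p n l u) v := by
  rw [propagate_eq, if_pos (show G.Reach p v from hu.tail (Or.inr h)),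
    if_neg (ne_of_reach_of_edge hT5 hu (Or.inr h)), aggParents_eq_singleton hT3a h,
    redParents_eq_empty hT3a hT3b h, sum_singleton, sum_empty, add_zero]

theorem propagate_of_aggParents_eq_empty {v : V} (hv : G.Reach p v) (hvp : v ≠ p)
    (h : G.aggParents v = ∅) :
    G.propagate hG c p n l v = ∑ u ∈ G.redParents v, G.propagate hG c p n l u := by
  rw [propagate_eq, if_pos hv, if_neg hvp, h, sum_empty, zero_add]

theorem propagate_eq_sum_aggChildren (hT5 : ∀ v, ¬ Relation.TransGen G.Edge v v)
    (hT3a : ∀ p p' q, (p, q) ∈ G.A → G.Edge p' q → p' = p)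
    (hT3b : ∀ p q, ¬((p, q) ∈ G.R ∧ (p, q) ∈ G.A))
    (hl : n = ∑ w ∈ G.aggChildren p, l w) {v : V} (hv : G.Reach p v)
    (hne : (G.aggChildren v).Nonempty) :
    G.propagate hG c p n l v = ∑ w ∈ G.aggChildren v, G.propagate hG c p n l w := by
  rw [sum_congr rfl fun w hw => propagate_of_mem_A hT5 hT3a hT3b hv (mem_aggChildren.1 hw)]
  by_cases hvp : v = p
  · obtain rfl := hvp
    simp only [share_self]
    rw [propagate_self, hl]
  · exact (sum_share_of_ne hvp hne l _).symm

theorem propagate_eq_sum_redParents (hT5 : ∀ v, ¬ Relation.TransGen G.Edge v v)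
    (hT3a : ∀ p p' q, (p, q) ∈ G.A → G.Edge p' q → p' = p)
    (hT3b : ∀ p q, ¬((p, q) ∈ G.R ∧ (p, q) ∈ G.A)) (hwd : G.WellDef c) (hp : c p = some n)
    {v : V} (hv : G.Reach p v) (hne : (G.redParents v).Nonempty) :
    G.propagate hG c p n l v = ∑ w ∈ G.redParents v, G.propagate hG c p n l w := by
  by_cases hvp : v = p
  · obtain rfl := hvp
    have hout : ∀ w ∈ G.redParents v, ¬ G.Reach v w := fun w hw hr =>
      ne_of_reach_of_edge hT5 hr (Or.inl (mem_redParents.1 hw)) rfl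
    rw [propagate_self, sum_congr rfl fun w hw => propagate_of_not_reach (hout w hw)]
    exact (hwd.2 v n hp).2 hne
  · refine propagate_of_aggParents_eq_empty hv hvp (eq_empty_iff_forall_notMem.2 fun u hu => ?_)
    rw [redParents_eq_empty hT3a hT3b (mem_aggParents.1 hu)] at hne
    exact not_nonempty_empty hne

theorem propagate_eq_cval_of_mem_aggChildren
    (hT3a : ∀ p p' q, (p, q) ∈ G.A → G.Edge p' q → p' = p) (hp : c p = some n) {v w : V}
    (hv : ¬ G.Reach p v) (hw : w ∈ G.aggChildren v) :
    G.propagate hG c p n l w = cval c w := by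
  by_cases hrw : G.Reach p w
  · -- the only arc into `w` comes from `v`, which lies outside `succ p`
    obtain rfl : w = p := by
      rcases hrw.cases_tail with h | ⟨u, hu, he⟩
      · exact h
      · exact absurd (hT3a v u w (mem_aggChildren.1 hw) he ▸ hu) hv
    rw [propagate_self, cval, hp]
    rfl
  · exact propagate_of_not_reach hrw

open Classical in
noncomputable def propagateConf (G : TFG V) (hG : WellFounded G.Edge) (c : V → Option ℕ)
    (p : V) (n : ℕ) (l : V → ℕ) : V → Option ℕ :=
  fun v => if G.Reach p v then some (G.propagate hG c p n l v) else c v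

theorem propagateConf_of_reach {v : V} (hv : G.Reach p v) :
    G.propagateConf hG c p n l v = some (G.propagate hG c p n l v) := by
  simp [propagateConf, hv]

theorem propagateConf_of_not_reach {v : V} (hv : ¬ G.Reach p v) :
    G.propagateConf hG c p n l v = c v := by
  simp [propagateConf, hv]

theorem cval_propagateConf (v : V) :
    cval (G.propagateConf hG c p n l) v = G.propagate hG c p n l v := by
  by_cases hv : G.Reach p v
  · rw [cval, propagateConf_of_reach hv]
    rfl
  · rw [cval, propagateConf_of_not_reach hv, propagate_of_not_reach hv]
    rfl

theorem isConfig_propagateConf (hT2 : ∀ v, G.kval v ≠ none → G.IsRoot v) (hc : G.IsConfig c)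
    (hp : c p = some n) : G.IsConfig (G.propagateConf hG c p n l) := by
  intro v k hk
  by_cases hv : G.Reach p v
  · obtain rfl : v = p := by
      rcases hv.cases_tail with h | ⟨u, -, he⟩
      · exact h
      · exact absurd he (hT2 v (by simp [hk]) u)
    rw [propagateConf_of_reach hv, propagate_self]
    exact hp.symm.trans (hc v k hk)
  · rw [propagateConf_of_not_reach hv]
    exact hc v k hk

theorem propagateConf_eq_none_iff_of_edge (hwd : G.WellDef c) (hp : c p = some n) {v w : V}
    (he : G.Edge v w) :
    G.propagateConf hG c p n l v = none ↔ G.propagateConf hG c p n l w = none := by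
  by_cases hv : G.Reach p v
  · simp [propagateConf_of_reach hv, propagateConf_of_reach (hv.tail he)]
  by_cases hw : G.Reach p w
  · have hcv : c v ≠ none := fun h => hwd.ne_none_of_reach hp hw ((hwd.1 v w he).1 h)
    simp [propagateConf_of_not_reach hv, propagateConf_of_reach hw, hcv]
  · rw [propagateConf_of_not_reach hv, propagateConf_of_not_reach hw]
    exact hwd.1 v w he

theorem wellDef_propagateConf (hT5 : ∀ v, ¬ Relation.TransGen G.Edge v v)
    (hT3a : ∀ p p' q, (p, q) ∈ G.A → G.Edge p' q → p' = p)
    (hT3b : ∀ p q, ¬((p, q) ∈ G.R ∧ (p, q) ∈ G.A)) (hwd : G.WellDef c) (hp : c p = some n)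
    (hl : n = ∑ w ∈ G.aggChildren p, l w) : G.WellDef (G.propagateConf hG c p n l) := by
  refine ⟨fun v w he => propagateConf_eq_none_iff_of_edge hwd hp he, fun v m hm => ?_⟩
  simp only [cval_propagateConf]
  by_cases hv : G.Reach p v
  · obtain rfl : G.propagate hG c p n l v = m := by
      simpa [propagateConf_of_reach hv] using hm
    exact ⟨propagate_eq_sum_aggChildren hT5 hT3a hT3b hl hv,
      propagate_eq_sum_redParents hT5 hT3a hT3b hwd hp hv⟩
  · rw [propagateConf_of_not_reach hv] at hm
    obtain ⟨hagg, hred⟩ := hwd.2 v m hm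
    refine ⟨fun hne => (hagg hne).trans (sum_congr rfl fun w hw => ?_).symm,
      fun hne => (hred hne).trans (sum_congr rfl fun w hw => ?_).symm⟩
    · exact propagate_eq_cval_of_mem_aggChildren hT3a hp hv hw
    · exact propagate_of_not_reach fun hr => hv (hr.tail (Or.inl (mem_redParents.1 hw)))

end Propagate

end TFG

theorem token_propagation_agglomeration_general {V : Type} [DecidableEq V] (G : TFG V) (E : EqSys V)
    (P1 P2 : Set V)
    (hwf : WellFormed G E P1 P2)
    (c : V → Option ℕ) (hc : G.IsConfig c) (hwd : G.WellDef c)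
    (p : V) (X : Finset V) (hX : X = G.aggChildren p)
    (n : ℕ) (hp : c p = some n)
    (l : V → ℕ) (hl : n = ∑ w ∈ X, l w) :
    ∃ c' : V → Option ℕ, G.IsConfig c' ∧ G.WellDef c' ∧
      c' p = some n ∧ (∀ w ∈ X, c' w = some (l w)) ∧
      (∀ v, v ∉ G.succs p → c' v = c v) := by
  subst hX
  have hG := TFG.wellFounded_edge hwf.T5
  refine ⟨G.propagateConf hG c p n l, TFG.isConfig_propagateConf hwf.T2 hc hp,
    TFG.wellDef_propagateConf hwf.T5 hwf.T3a hwf.T3b hwd hp hl, ?_, fun w hw => ?_,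
    fun v hv => TFG.propagateConf_of_not_reach hv⟩
  · rw [TFG.propagateConf_of_reach .refl, TFG.propagate_self]
  · have hA := TFG.mem_aggChildren.1 hw
    rw [TFG.propagateConf_of_reach (.single (Or.inr hA)),
      TFG.propagate_of_mem_A hwf.T5 hwf.T3a hwf.T3b .refl hA, TFG.share_self]

theorem token_propagation_agglomeration {V : Type} [DecidableEq V] (G : TFG V) (E : EqSys V)
    (P1 P2 : Set V) [DecidablePred (· ∈ P1)] [DecidablePred (· ∈ P2)]
    (N1 : PetriNet ↥P1) (m1 : ↥P1 → ℕ) (N2 : PetriNet ↥P2) (m2 : ↥P2 → ℕ)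
    (hwf : WellFormed G E P1 P2) (heq : EEquiv E P1 P2 N1 m1 N2 m2)
    (c : V → Option ℕ) (hc : G.IsConfig c) (hwd : G.WellDef c)
    (p : V) (X : Finset V) (hX : X = G.aggChildren p) (hXne : X.Nonempty)
    (n : ℕ) (hp : c p = some n)
    (l : V → ℕ) (hl : n = ∑ w ∈ X, l w) :
    ∃ c' : V → Option ℕ, G.IsConfig c' ∧ G.WellDef c' ∧
      c' p = some n ∧ (∀ w ∈ X, c' w = some (l w)) ∧
      (∀ v, v ∉ G.succs p → c' v = c v) :=
  token_propagation_agglomeration_general G E P1 P2 hwf c hc hwd p X hX n hp l hl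
end

section
/- Let G(E) be a well-formed TFG for (N1,m1) ▷_E (N2,m2). If m is a reachable marking of (N1,m1) or of (N2,m2), then there exists a total, well-defined configuration c of G(E) compatible with m (i.e., c(p) = m(p) on all places in the domain of m). Conversely, for any total, well-defined configuration c, the restriction of c to the places of N1 is reachable in (N1,m1) if and only if the restriction of c to the places of N2 is reachable in (N2,m2). -/
open Finset

variable {V : Type} [DecidableEq V]

/-!
A solution `s` of `E` turns into a total, well-defined configuration: constant nodes keep their
value and every other node `v` gets `s v`; (T4) says the equations of `E` are exactly the
(CEq) conditions of the graph, and (T1) makes every node of `E` and every place non-constant.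
Conversely, the values of a total, well-defined configuration solve `E`. So the first part
follows from (A1), and the second from (A3) applied to the solution read off the configuration.
-/

def TFG.confOfSolution (G : TFG V) (s : V → ℕ) : V → Option ℕ :=
  fun v => some ((G.kval v).getD (s v))

namespace TFG

variable {G : TFG V}

theorem isConfig_confOfSolution (s : V → ℕ) : G.IsConfig (G.confOfSolution s) :=
  fun _ _ h => by simp [confOfSolution, h]

theorem totalConf_confOfSolution (s : V → ℕ) : TotalConf (G.confOfSolution s) :=
  fun _ => by simp [confOfSolution]

theorem confOfSolution_of_kval_eq_none {s : V → ℕ} {v : V} (hv : G.kval v = none) :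
    G.confOfSolution s v = some (s v) := by
  simp [confOfSolution, hv]

theorem compatM_confOfSolution {s : V → ℕ} {P : Set V} {m : ↥P → ℕ}
    (hP : ∀ v ∈ P, G.kval v = none) (hs : AgreesOn s P m) :
    CompatM (G.confOfSolution s) P m := fun p => by
  rw [confOfSolution_of_kval_eq_none (hP p p.2), hs p]

end TFG

namespace WellFormed

variable {G : TFG V} {E : EqSys V} {P1 P2 : Set V}

theorem kval_eq_none (hwf : WellFormed G E P1 P2) {v : V} (hv : v ∈ P1 ∪ P2 ∪ fvars E) :
    G.kval v = none := by
  rw [← hwf.T1] at hv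
  exact hv

theorem aggChildren_mem (hwf : WellFormed G E P1 P2) {v : V}
    (hv : (G.aggChildren v).Nonempty) : (v, G.aggChildren v) ∈ E :=
  (hwf.T4 v _).mp ⟨Or.inl rfl, hv⟩

theorem redParents_mem (hwf : WellFormed G E P1 P2) {v : V}
    (hv : (G.redParents v).Nonempty) : (v, G.redParents v) ∈ E :=
  (hwf.T4 v _).mp ⟨Or.inr rfl, hv⟩

theorem confOfSolution_eq_sum (hwf : WellFormed G E P1 P2) {s : V → ℕ} (hs : Solves E s)
    {v : V} {X : Finset V} (hE : (v, X) ∈ E) :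
    G.confOfSolution s v = some (∑ w ∈ X, cval (G.confOfSolution s) w) := by
  have hfv : ∀ w, (w = v ∨ w ∈ X) → G.kval w = none := fun w hw =>
    hwf.kval_eq_none (Or.inr ⟨(v, X), hE, hw⟩)
  rw [TFG.confOfSolution_of_kval_eq_none (hfv v (Or.inl rfl)), hs _ hE]
  congr 1
  refine sum_congr rfl fun w hw => ?_
  simp [cval, TFG.confOfSolution_of_kval_eq_none (hfv w (Or.inr hw))]

theorem wellDef_confOfSolution (hwf : WellFormed G E P1 P2) {s : V → ℕ} (hs : Solves E s) :
    G.WellDef (G.confOfSolution s) := by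
  refine ⟨fun v w _ => by simp [TFG.confOfSolution],
    fun v n hn => ⟨fun hne => ?_, fun hne => ?_⟩⟩
  · exact Option.some.inj
      (hn.symm.trans (hwf.confOfSolution_eq_sum hs (hwf.aggChildren_mem hne)))
  · exact Option.some.inj
      (hn.symm.trans (hwf.confOfSolution_eq_sum hs (hwf.redParents_mem hne)))

theorem exists_config_compatM (hwf : WellFormed G E P1 P2) {P : Set V}
    (hP : ∀ v ∈ P, G.kval v = none) {m : ↥P → ℕ}
    (hm : ∃ s, Solves E s ∧ AgreesOn s P m) :
    ∃ c, G.IsConfig c ∧ TotalConf c ∧ G.WellDef c ∧ CompatM c P m := by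
  obtain ⟨s, hs, hag⟩ := hm
  exact ⟨G.confOfSolution s, TFG.isConfig_confOfSolution s, TFG.totalConf_confOfSolution s,
    hwf.wellDef_confOfSolution hs, TFG.compatM_confOfSolution hP hag⟩

theorem solves_cval (hwf : WellFormed G E P1 P2) {c : V → Option ℕ} (htot : TotalConf c)
    (hwd : G.WellDef c) : Solves E (cval c) := by
  rintro ⟨v, X⟩ hE
  obtain ⟨n, hn⟩ := Option.ne_none_iff_exists'.mp (htot v)
  obtain ⟨rfl | rfl, hne⟩ := (hwf.T4 v X).mpr hE
  · simpa [cval, hn] using (hwd.2 v n hn).1 hne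
  · simpa [cval, hn] using (hwd.2 v n hn).2 hne

end WellFormed

theorem configuration_reachability_general {V : Type} [DecidableEq V] (G : TFG V) (E : EqSys V)
    (P1 P2 : Set V)
    (N1 : PetriNet ↥P1) (m1 : ↥P1 → ℕ) (N2 : PetriNet ↥P2) (m2 : ↥P2 → ℕ)
    (hwf : WellFormed G E P1 P2) (heq : EEquiv E P1 P2 N1 m1 N2 m2) :
    ((∀ m : ↥P1 → ℕ, N1.reach m1 m →
        ∃ c : V → Option ℕ, G.IsConfig c ∧ TotalConf c ∧ G.WellDef c ∧ CompatM c P1 m) ∧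
     (∀ m : ↥P2 → ℕ, N2.reach m2 m →
        ∃ c : V → Option ℕ, G.IsConfig c ∧ TotalConf c ∧ G.WellDef c ∧ CompatM c P2 m)) ∧
    (∀ c : V → Option ℕ, G.IsConfig c → TotalConf c → G.WellDef c →
        (N1.reach m1 (restrict c P1) ↔ N2.reach m2 (restrict c P2))) := by
  refine ⟨⟨fun m hm => ?_, fun m hm => ?_⟩, fun c _ htot hwd => ?_⟩
  · exact hwf.exists_config_compatM (fun v hv => hwf.kval_eq_none (Or.inl (Or.inl hv)))
      (heq.A1l m hm)
  · exact hwf.exists_config_compatM (fun v hv => hwf.kval_eq_none (Or.inl (Or.inr hv)))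
      (heq.A1r m hm)
  · exact heq.A3 _ _ ⟨cval c, hwf.solves_cval htot hwd, fun _ => rfl, fun _ => rfl⟩

theorem configuration_reachability {V : Type} [DecidableEq V] (G : TFG V) (E : EqSys V)
    (P1 P2 : Set V) [DecidablePred (· ∈ P1)] [DecidablePred (· ∈ P2)]
    (N1 : PetriNet ↥P1) (m1 : ↥P1 → ℕ) (N2 : PetriNet ↥P2) (m2 : ↥P2 → ℕ)
    (hwf : WellFormed G E P1 P2) (heq : EEquiv E P1 P2 N1 m1 N2 m2) :
    ((∀ m : ↥P1 → ℕ, N1.reach m1 m →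
        ∃ c : V → Option ℕ, G.IsConfig c ∧ TotalConf c ∧ G.WellDef c ∧ CompatM c P1 m) ∧
     (∀ m : ↥P2 → ℕ, N2.reach m2 m →
        ∃ c : V → Option ℕ, G.IsConfig c ∧ TotalConf c ∧ G.WellDef c ∧ CompatM c P2 m)) ∧
    (∀ c : V → Option ℕ, G.IsConfig c → TotalConf c → G.WellDef c →
        (N1.reach m1 (restrict c P1) ↔ N2.reach m2 (restrict c P2))) :=
  configuration_reachability_general G E P1 P2 N1 m1 N2 m2 hwf heq
end

section
/- Let G(E) be a well-formed TFG for (N1,m1) ▷_E (N2,m2). A marking m1' is reachable in (N1,m1) if and only if there exists a total, well-defined configuration c with c ≡ m1' such that the restriction of c to the places of N2 is reachable in (N2,m2). -/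
open Finset

variable {V : Type} [DecidableEq V]

/-!
A solution of `E` that agrees with a reachable marking (A1) becomes a total configuration once
the constant nodes are overwritten by their constants; (T1) keeps those off the variables of `E`.
For total configurations, (T4) makes well-definedness the same as "the values solve `E`", so (A3)
transfers reachability between the restrictions of any such configuration to `N1` and to `N2`.
-/

theorem TotalConf.eq_some_cval {V : Type} {c : V → Option ℕ} (hc : TotalConf c) (v : V) :
    c v = some (cval c v) := by
  obtain ⟨n, hn⟩ := Option.ne_none_iff_exists'.1 (hc v)
  simp [cval, hn]

theorem CompatM.restrict_eq {V : Type} {c : V → Option ℕ} {P : Set V} {m : ↥P → ℕ}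
    (h : CompatM c P m) : restrict c P = m :=
  funext fun p => by simp [_root_.restrict, cval, h p]

theorem Solves.congr {V : Type} {E : EqSys V} {s s' : V → ℕ} (hs : Solves E s)
    (h : ∀ v ∈ fvars E, s v = s' v) : Solves E s' := by
  intro e he
  rw [← h e.1 ⟨e, he, Or.inl rfl⟩, hs e he]
  exact Finset.sum_congr rfl fun w hw => h w ⟨e, he, Or.inr hw⟩

def TFG.withConsts (G : TFG V) (s : V → ℕ) : V → Option ℕ :=
  fun v => some ((G.kval v).getD (s v))

theorem TFG.isConfig_withConsts (G : TFG V) (s : V → ℕ) : G.IsConfig (G.withConsts s) := by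
  intro v n hv
  simp [TFG.withConsts, hv]

theorem TFG.totalConf_withConsts (G : TFG V) (s : V → ℕ) : TotalConf (G.withConsts s) := by
  simp [TotalConf, TFG.withConsts]

theorem TFG.cval_withConsts_of_kval_eq_none (G : TFG V) (s : V → ℕ) {v : V}
    (hv : G.kval v = none) : cval (G.withConsts s) v = s v := by
  simp [cval, TFG.withConsts, hv]

namespace WellFormed

variable {G : TFG V} {E : EqSys V} {P1 P2 : Set V}

/-- By (T4) the equations of `E` are exactly the sum conditions (CEq) of the TFG. -/
theorem wellDef_iff_solves (hwf : WellFormed G E P1 P2) {c : V → Option ℕ} (hc : TotalConf c) :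
    G.WellDef c ↔ Solves E (cval c) := by
  constructor
  · rintro ⟨-, hsum⟩ ⟨v, X⟩ he
    obtain ⟨hX, hne⟩ := (hwf.T4 v X).2 he
    have hsum := hsum v _ (hc.eq_some_cval v)
    rcases hX with rfl | rfl
    · exact hsum.1 hne
    · exact hsum.2 hne
  · intro hs
    refine ⟨fun v w _ => by simp [hc v, hc w], fun v n hv => ?_⟩
    have hn : n = cval c v := by simp [cval, hv]
    subst hn
    exact ⟨fun hne => hs _ ((hwf.T4 v _).1 ⟨Or.inl rfl, hne⟩),
      fun hne => hs _ ((hwf.T4 v _).1 ⟨Or.inr rfl, hne⟩)⟩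

theorem exists_config_of_solves (hwf : WellFormed G E P1 P2) {s : V → ℕ} (hs : Solves E s)
    {m : ↥P1 → ℕ} (hm : AgreesOn s P1 m) :
    ∃ c, G.IsConfig c ∧ TotalConf c ∧ G.WellDef c ∧ CompatM c P1 m := by
  have hval : ∀ v ∈ P1 ∪ P2 ∪ fvars E, s v = cval (G.withConsts s) v := fun v hv =>
    (G.cval_withConsts_of_kval_eq_none s (hwf.kval_eq_none hv)).symm
  have htot := G.totalConf_withConsts s
  refine ⟨G.withConsts s, G.isConfig_withConsts s, htot,
    (hwf.wellDef_iff_solves htot).2 (hs.congr fun v hv => hval v (Or.inr hv)), fun p => ?_⟩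
  rw [htot.eq_some_cval, ← hval p (Or.inl (Or.inl p.2)), hm p]

end WellFormed

theorem EEquiv.reach_restrict_iff {G : TFG V} {E : EqSys V} {P1 P2 : Set V}
    {N1 : PetriNet ↥P1} {m1 : ↥P1 → ℕ} {N2 : PetriNet ↥P2} {m2 : ↥P2 → ℕ}
    (heq : EEquiv E P1 P2 N1 m1 N2 m2) (hwf : WellFormed G E P1 P2) {c : V → Option ℕ}
    (hc : TotalConf c) (hwd : G.WellDef c) :
    N1.reach m1 (restrict c P1) ↔ N2.reach m2 (restrict c P2) :=
  heq.A3 _ _ ⟨cval c, (hwf.wellDef_iff_solves hc).1 hwd, fun _ => rfl, fun _ => rfl⟩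

theorem reachability_decision_general {V : Type} [DecidableEq V] (G : TFG V) (E : EqSys V)
    (P1 P2 : Set V)
    (N1 : PetriNet ↥P1) (m1 : ↥P1 → ℕ) (N2 : PetriNet ↥P2) (m2 : ↥P2 → ℕ)
    (hwf : WellFormed G E P1 P2) (heq : EEquiv E P1 P2 N1 m1 N2 m2) (m1' : ↥P1 → ℕ) :
    N1.reach m1 m1' ↔
      ∃ c : V → Option ℕ, G.IsConfig c ∧ TotalConf c ∧ G.WellDef c ∧
        CompatM c P1 m1' ∧ N2.reach m2 (restrict c P2) := by
  constructor
  · intro h1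
    obtain ⟨s, hs, hm⟩ := heq.A1l m1' h1
    obtain ⟨c, hconf, htot, hwd, hcomp⟩ := hwf.exists_config_of_solves hs hm
    refine ⟨c, hconf, htot, hwd, hcomp, ?_⟩
    rw [← heq.reach_restrict_iff hwf htot hwd, hcomp.restrict_eq]
    exact h1
  · rintro ⟨c, -, htot, hwd, hcomp, hr2⟩
    rw [← hcomp.restrict_eq]
    exact (heq.reach_restrict_iff hwf htot hwd).2 hr2

theorem reachability_decision {V : Type} [DecidableEq V] (G : TFG V) (E : EqSys V)
    (P1 P2 : Set V) [DecidablePred (· ∈ P1)] [DecidablePred (· ∈ P2)]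
    (N1 : PetriNet ↥P1) (m1 : ↥P1 → ℕ) (N2 : PetriNet ↥P2) (m2 : ↥P2 → ℕ)
    (hwf : WellFormed G E P1 P2) (heq : EEquiv E P1 P2 N1 m1 N2 m2) (m1' : ↥P1 → ℕ) :
    N1.reach m1 m1' ↔
      ∃ c : V → Option ℕ, G.IsConfig c ∧ TotalConf c ∧ G.WellDef c ∧
        CompatM c P1 m1' ∧ N2.reach m2 (restrict c P2) :=
  reachability_decision_general G E P1 P2 N1 m1 N2 m2 hwf heq m1'
end
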